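/- Let Q be a finite quiver, S a reduced set of paths of length at least 2, and n ≥ 1. If w is an n-overlap for S, then there exists a unique path w' such that w' is a left divisor of w (i.e. w = w'u for some path u) and w' is an (n−1)-overlap for S. -/

import Mathlib

universe u v

/-! Combinatorics of paths in a quiver: divisibility, overlaps, quasioverlaps. -/

/-- The type of all paths in a quiver `V`, bundled with their endpoints. -/
abbrev PathIn (V : Type u) [Quiver.{v + 1} V] : Type (max u (v + 1)) :=
  Σ a b : V, Quiver.Path a b

namespace PathIn

variable {V : Type u} [Quiver.{v + 1} V]

/-- Source of a bundled path. -/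
def src (p : PathIn V) : V := p.1

/-- Target of a bundled path. -/
def tgt (p : PathIn V) : V := p.2.1

/-- Length of a bundled path. -/
def len (p : PathIn V) : ℕ := p.2.2.length

/-- The path of length zero at a vertex. -/
def vert (a : V) : PathIn V := ⟨a, a, Quiver.Path.nil⟩

/-- Concatenation of bundled paths (junk value `p` if the endpoints do not match). -/
noncomputable def comp (p q : PathIn V) : PathIn V :=
  open Classical in
  if h : p.tgt = q.src then ⟨p.1, q.2.1, p.2.2.comp (q.2.2.cast h.symm rfl)⟩ else p

/-- `LDiv p q` : `p` divides `q` on the left, i.e. `q = p v` for some path `v`. -/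
def LDiv (p q : PathIn V) : Prop :=
  ∃ v : PathIn V, p.tgt = v.src ∧ q = p.comp v

/-- `RDiv p q` : `p` divides `q` on the right, i.e. `q = u p` for some path `u`. -/
def RDiv (p q : PathIn V) : Prop :=
  ∃ u : PathIn V, u.tgt = p.src ∧ q = u.comp p

/-- `Div p q` : `p` divides `q`, i.e. `q = u p v` for some paths `u, v`. -/
def Div (p q : PathIn V) : Prop :=
  ∃ u v : PathIn V, u.tgt = p.src ∧ p.tgt = v.src ∧ q = (u.comp p).comp v

/-- A set of paths is reduced if no element of it properly divides another element. -/
def Reduced (S : Set (PathIn V)) : Prop :=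
  ∀ q ∈ S, ∀ p ∈ S, p ≠ q → ¬ Div p q

/-- `p` is an `S`-path if some element of `S` divides it on the right. -/
def IsSPath (S : Set (PathIn V)) (p : PathIn V) : Prop :=
  ∃ s ∈ S, RDiv s p

/-- `q` `S`-vanishes `p` (written `q ∣_S p`): `p = q u` where no element of `S` divides `u`. -/
def SVan (S : Set (PathIn V)) (q p : PathIn V) : Prop :=
  ∃ u : PathIn V, q.tgt = u.src ∧ p = q.comp u ∧ ∀ s ∈ S, ¬ Div s u

/-- `q` almost `S`-vanishes `p` (written `q ∣_S^a p`): `p = q u`, `q` does not `S`-vanish `p`,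
and for every factorization `u = u₁ u₂` with `u₂` of positive length, `q` `S`-vanishes `q u₁`. -/
def ASVan (S : Set (PathIn V)) (q p : PathIn V) : Prop :=
  ∃ u : PathIn V, q.tgt = u.src ∧ p = q.comp u ∧ ¬ SVan S q p ∧
    ∀ u₁ u₂ : PathIn V, u₁.tgt = u₂.src → u = u₁.comp u₂ → 0 < u₂.len →
      SVan S q (q.comp u₁)

/-- The set of `n`-overlaps of a set of paths `S`. -/
def Overlaps (S : Set (PathIn V)) : ℕ → Set (PathIn V)
  | 0 => {p | p.len = 1}
  | 1 => S
  | (n + 2) => {w | ∃ w₁ ∈ Overlaps S (n + 1), ∃ w₂ ∈ Overlaps S n,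
      SVan S w₁ w ∧ ASVan S w₂ w}

/-- The set of `n`-quasioverlaps of a set of paths `S`: pairs `(w, v)` with `v` of
positive length. -/
def QOverlaps (S : Set (PathIn V)) : ℕ → Set (PathIn V × PathIn V)
  | 0 => {wv | wv.1.len = 0 ∧ 0 < wv.2.len ∧ wv.2.tgt = wv.1.src}
  | 1 => {wv | 0 < wv.1.len ∧ 0 < wv.2.len ∧ wv.2.tgt = wv.1.src ∧ wv.2.comp wv.1 ∈ S}
  | (n + 2) => {wv | ∃ w₁, (w₁, wv.2) ∈ QOverlaps S (n + 1) ∧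
      ∃ w₂, (w₂, wv.2) ∈ QOverlaps S n ∧ SVan S w₁ wv.1 ∧ ASVan S w₂ wv.1}

/-- `sup` of the lengths of the `n`-overlaps of `S`, in `EReal` (`-∞` if there are none). -/
noncomputable def maxo (S : Set (PathIn V)) (n : ℕ) : EReal :=
  sSup ((fun w => (w.len : EReal)) '' Overlaps S n)

/-- `inf` of the lengths of the `n`-overlaps of `S`, in `EReal` (`+∞` if there are none). -/
noncomputable def mino (S : Set (PathIn V)) (n : ℕ) : EReal :=
  sInf ((fun w => (w.len : EReal)) '' Overlaps S n)

/-- `sup` of the lengths of the first components of `n`-quasioverlaps of `S`. -/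
noncomputable def maxqo (S : Set (PathIn V)) (n : ℕ) : EReal :=
  sSup ((fun w => (w.len : EReal)) '' {w | ∃ v, (w, v) ∈ QOverlaps S n})

/-- `inf` of the lengths of the first components of `n`-quasioverlaps of `S`. -/
noncomputable def minqo (S : Set (PathIn V)) (n : ℕ) : EReal :=
  sInf ((fun w => (w.len : EReal)) '' {w | ∃ v, (w, v) ∈ QOverlaps S n})

end PathIn

/-! Recording a path by its source and its list of arrows turns left divisibility into the
prefix order on lists, so the left divisors of a fixed path form a chain. Uniqueness therefore
reduces to showing that no `m`-overlap properly left-divides another: for `m = 0` by length, for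
`m = 1` because `S` is reduced, and for `m ≥ 2` by induction: the `(m-2)`-overlaps that the two
almost `S`-vanish coincide, and then the shorter one would be a proper left divisor of the longer
one not `S`-vanished by that common overlap, which almost vanishing forbids. Existence is the
first arrow of `w` when `n = 1`, and the `(n-1)`-overlap that `S`-vanishes `w` when `n ≥ 2`. -/

namespace Quiver.Path

variable {V : Type u} [Quiver.{v + 1} V]

def arrows {a : V} : ∀ {b : V}, Path a b → List (Σ x y : V, x ⟶ y)
  | _, .nil => []
  | _, .cons p e => p.arrows ++ [⟨_, _, e⟩]

@[simp]
lemma arrows_nil {a : V} : (nil : Path a a).arrows = [] := rfl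

@[simp]
lemma arrows_cons {a b c : V} (p : Path a b) (e : b ⟶ c) :
    (p.cons e).arrows = p.arrows ++ [⟨_, _, e⟩] := rfl

@[simp]
lemma length_arrows {a b : V} (p : Path a b) : p.arrows.length = p.length := by
  induction p with
  | nil => rfl
  | cons p e ih => simp [ih]

@[simp]
lemma arrows_comp {a b c : V} (p : Path a b) (q : Path b c) :
    (p.comp q).arrows = p.arrows ++ q.arrows := by
  induction q with
  | nil => simp
  | cons q e ih => simp [ih]

lemma sigma_eq_of_arrows_eq {a b c : V} (p : Path a b) (q : Path a c)
    (h : p.arrows = q.arrows) : (⟨b, p⟩ : Σ x, Path a x) = ⟨c, q⟩ := by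
  induction p generalizing c with
  | nil =>
    cases q with
    | nil => rfl
    | cons q f => simp at h
  | cons p e ih =>
    cases q with
    | nil => simp at h
    | cons q f =>
      obtain ⟨hpq, hef⟩ := List.append_inj' h rfl
      cases ih q hpq
      obtain ⟨rfl, ⟨⟩⟩ : _ = _ ∧ e ≍ f := by simpa using hef
      rfl

end Quiver.Path

namespace PathIn

variable {V : Type u} [Quiver.{v + 1} V]

def arrows (p : PathIn V) : List (Σ x y : V, x ⟶ y) := p.2.2.arrows

lemma len_eq_length_arrows (p : PathIn V) : p.len = p.arrows.length :=
  (Quiver.Path.length_arrows _).symm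

lemma ext_arrows {p q : PathIn V} (hsrc : p.src = q.src) (h : p.arrows = q.arrows) :
    p = q := by
  obtain ⟨a, b, p⟩ := p
  obtain ⟨a, c, q⟩ := q
  cases hsrc
  rw [Quiver.Path.sigma_eq_of_arrows_eq p q h]

lemma mk_comp_mk {a b c : V} (p : Quiver.Path a b) (q : Quiver.Path b c) :
    comp (⟨a, b, p⟩ : PathIn V) ⟨b, c, q⟩ = ⟨a, c, p.comp q⟩ := by
  simp [comp, tgt, src]

lemma src_comp {p q : PathIn V} (h : p.tgt = q.src) : (p.comp q).src = p.src := by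
  rw [comp, dif_pos h]; rfl

lemma arrows_comp {p q : PathIn V} (h : p.tgt = q.src) :
    (p.comp q).arrows = p.arrows ++ q.arrows := by
  obtain ⟨a, b, p⟩ := p
  obtain ⟨b', c, q⟩ := q
  cases h
  rw [mk_comp_mk]
  exact Quiver.Path.arrows_comp p q

lemma len_comp {p q : PathIn V} (h : p.tgt = q.src) : (p.comp q).len = p.len + q.len := by
  simp only [len_eq_length_arrows, arrows_comp h, List.length_append]

lemma ldiv_iff {p q : PathIn V} : LDiv p q ↔ p.src = q.src ∧ p.arrows <+: q.arrows := by
  constructor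
  · rintro ⟨v, hv, rfl⟩
    exact ⟨(src_comp hv).symm, v.arrows, (arrows_comp hv).symm⟩
  · rintro ⟨hsrc, l, hl⟩
    obtain ⟨a, b, p⟩ := p
    obtain ⟨a, c, q⟩ := q
    cases hsrc
    have hle : p.length ≤ q.length := by
      have := congrArg List.length hl
      simp only [arrows, List.length_append, Quiver.Path.length_arrows] at this
      omega
    obtain ⟨d, q₁, q₂, rfl, hlen⟩ := q.exists_eq_comp_of_le_length hle
    simp only [arrows, Quiver.Path.arrows_comp] at hl
    have h₁ := (List.append_inj hl (by simp [hlen])).1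
    cases Quiver.Path.sigma_eq_of_arrows_eq p q₁ h₁
    exact ⟨⟨b, c, q₂⟩, rfl, (mk_comp_mk p q₂).symm⟩

lemma LDiv.trans {p q r : PathIn V} (hpq : LDiv p q) (hqr : LDiv q r) : LDiv p r := by
  rw [ldiv_iff] at *
  exact ⟨hpq.1.trans hqr.1, hpq.2.trans hqr.2⟩

lemma ldiv_or_ldiv_of_ldiv {p q w : PathIn V} (hpw : LDiv p w) (hqw : LDiv q w) :
    LDiv p q ∨ LDiv q p := by
  simp only [ldiv_iff] at *
  exact (List.prefix_or_prefix_of_prefix hpw.2 hqw.2).imp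
    (⟨hpw.1.trans hqw.1.symm, ·⟩) (⟨hqw.1.trans hpw.1.symm, ·⟩)

lemma LDiv.eq_of_len_le {p q : PathIn V} (h : LDiv p q) (hlen : q.len ≤ p.len) : p = q := by
  rw [ldiv_iff] at h
  rw [len_eq_length_arrows, len_eq_length_arrows] at hlen
  exact ext_arrows h.1 (h.2.eq_of_length_le hlen)

lemma ldiv_of_ldiv_comp_comp {r u u' : PathIn V} (hu : r.tgt = u.src) (hu' : r.tgt = u'.src)
    (h : LDiv (r.comp u) (r.comp u')) : LDiv u u' := by
  rw [ldiv_iff, arrows_comp hu, arrows_comp hu'] at *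
  exact ⟨hu.symm.trans hu', (List.prefix_append_right_inj _).mp h.2⟩

lemma vert_comp (p : PathIn V) : comp (vert p.src) p = p := by
  obtain ⟨a, b, p⟩ := p
  exact (mk_comp_mk .nil p).trans (by rw [Quiver.Path.nil_comp])

lemma LDiv.div {p q : PathIn V} (h : LDiv p q) : Div p q := by
  obtain ⟨v, hv, rfl⟩ := h
  exact ⟨vert p.src, v, rfl, hv, by rw [vert_comp]⟩

lemma exists_ldiv_len_eq (p : PathIn V) {k : ℕ} (hk : k ≤ p.len) :
    ∃ p', LDiv p' p ∧ p'.len = k := by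
  obtain ⟨a, b, p⟩ := p
  obtain ⟨d, p₁, p₂, rfl, hlen⟩ := p.exists_eq_comp_of_le_length hk
  exact ⟨⟨a, d, p₁⟩, ⟨⟨d, b, p₂⟩, rfl, (mk_comp_mk p₁ p₂).symm⟩, hlen⟩

variable {S : Set (PathIn V)}

lemma SVan.ldiv {r p : PathIn V} (h : SVan S r p) : LDiv r p :=
  let ⟨u, hu, hp, _⟩ := h
  ⟨u, hu, hp⟩

lemma ASVan.ldiv {r p : PathIn V} (h : ASVan S r p) : LDiv r p :=
  let ⟨u, hu, hp, _⟩ := h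
  ⟨u, hu, hp⟩

lemma ASVan.eq_of_ldiv {r p q : PathIn V} (hp : ASVan S r p) (hq : ASVan S r q)
    (hpq : LDiv p q) : p = q := by
  obtain ⟨u, hu, rfl, hnvan, -⟩ := hp
  obtain ⟨u', hu', rfl, -, hmin⟩ := hq
  obtain ⟨u₂, hu₂, rfl⟩ := ldiv_of_ldiv_comp_comp hu hu' hpq
  rcases Nat.eq_zero_or_pos u₂.len with hzero | hpos
  · exact hpq.eq_of_len_le (by rw [len_comp hu', len_comp hu₂, len_comp hu, hzero, add_zero])
  · exact absurd (hmin u u₂ hu₂ rfl hpos) hnvan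

theorem Overlaps.eq_of_ldiv (hred : Reduced S) :
    ∀ {m : ℕ} {p q : PathIn V}, p ∈ Overlaps S m → q ∈ Overlaps S m → LDiv p q → p = q
  | 0, _, _, hp, hq, h => h.eq_of_len_le (le_of_eq (hq.trans hp.symm))
  | 1, p, q, hp, hq, h => by_contra fun hne => hred q hq p hp hne h.div
  | _ + 2, _, _, ⟨_, _, p₂, hp₂, _, hp⟩, ⟨_, _, q₂, hq₂, _, hq⟩, h => by
    obtain rfl : p₂ = q₂ := by
      rcases ldiv_or_ldiv_of_ldiv (hp.ldiv.trans h) hq.ldiv with h₂ | h₂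
      exacts [eq_of_ldiv hred hp₂ hq₂ h₂, (eq_of_ldiv hred hq₂ hp₂ h₂).symm]
    exact hp.eq_of_ldiv hq h

theorem Overlaps.eq_of_ldiv_of_ldiv (hred : Reduced S) {m : ℕ} {p q w : PathIn V}
    (hp : p ∈ Overlaps S m) (hq : q ∈ Overlaps S m) (hpw : LDiv p w) (hqw : LDiv q w) :
    p = q := by
  rcases ldiv_or_ldiv_of_ldiv hpw hqw with h | h
  exacts [eq_of_ldiv hred hp hq h, (eq_of_ldiv hred hq hp h).symm]

theorem Overlaps.exists_ldiv_mem_pred (hS : ∀ p ∈ S, 0 < p.len) :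
    ∀ {n : ℕ} {w : PathIn V}, 1 ≤ n → w ∈ Overlaps S n →
      ∃ w', LDiv w' w ∧ w' ∈ Overlaps S (n - 1)
  | 1, w, _, hw => exists_ldiv_len_eq w (hS w hw)
  | _ + 2, _, _, ⟨w₁, hw₁, _, _, hvan, _⟩ => ⟨w₁, hvan.ldiv, hw₁⟩

end PathIn

/-- if `w` is an `n`-overlap for a reduced set of paths `S` (`n ≥ 1`), there is a
unique path `w'` dividing `w` on the left which is an `(n-1)`-overlap for `S`. -/
theorem unique_left_divisor_overlap {V : Type u} [Quiver.{v + 1} V]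
    [Fintype V] [∀ a b : V, Fintype (a ⟶ b)]
    (S : Set (PathIn V)) (hS : ∀ p ∈ S, 2 ≤ p.len) (hred : PathIn.Reduced S)
    (n : ℕ) (hn : 1 ≤ n) (w : PathIn V) (hw : w ∈ PathIn.Overlaps S n) :
    ∃! w' : PathIn V, PathIn.LDiv w' w ∧ w' ∈ PathIn.Overlaps S (n - 1) := by
  obtain ⟨w', hw'w, hw'⟩ :=
    PathIn.Overlaps.exists_ldiv_mem_pred (fun p hp => (hS p hp).trans_lt' two_pos) hn hw
  exact ⟨w', ⟨hw'w, hw'⟩, fun y ⟨hyw, hy⟩ =>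
    PathIn.Overlaps.eq_of_ldiv_of_ldiv hred hy hw' hyw hw'w⟩
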